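/- arXiv:2507.08653 — 5 statements merged into one kernel-verified Lean document; each statement's English description precedes it below -/
import Mathlib

section
/- Lemma 1 (optimality conditions): Suppose (h*, p*, m*) is feasible for the WNCS joint design problem and minimizes the objective F over all feasible triples, and suppose that for every node i the per-node power coefficient Wtx_i(p*_i, m*_i) + Wc_i is strictly positive. Then for every node i the quantity (α − m*_i/B)/h*_i is a positive integer k*_i, and moreover k*_i = ln(1 − δ)/ln(p*_i), i.e. p*_i = (1 − δ)^(1/k*_i). -/
/-- Finite-blocklength transmit power of a node with constants `C1`, packet length `L`,
packet error probability `p`, and blocklength `m`; `qinv` plays the role of `Q⁻¹`. -/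
noncomputable def Wtx (qinv : ℝ → ℝ) (C1 L p m : ℝ) : ℝ :=
  C1 * (Real.exp (qinv p / Real.sqrt m + Real.log 2 * L / m) - 1)

/-- Feasibility for the WNCS joint design problem. -/
def Feasible (N : ℕ) (B α δ β Mth Wmax : ℝ) (L C1 : Fin N → ℝ) (qinv : ℝ → ℝ)
    (h p m : Fin N → ℝ) : Prop :=
  (∀ i, 0 < m i ∧ m i ≤ Mth ∧
    0 < h i ∧ h i ≤ α - m i / B ∧
    0 < p i ∧ p i < 1 ∧
    (p i) ^ ⌊(α - m i / B) / h i⌋₊ ≤ 1 - δ ∧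
    Wtx qinv (C1 i) (L i) (p i) (m i) ≤ Wmax) ∧
  (∑ i, (m i / B) / h i) ≤ β

/-- Objective: total power consumption. -/
noncomputable def objF (N : ℕ) (B : ℝ) (L C1 Wc : Fin N → ℝ) (qinv : ℝ → ℝ)
    (h p m : Fin N → ℝ) : ℝ :=
  ∑ i, (Wtx qinv (C1 i) (L i) (p i) (m i) + Wc i) * ((m i / B) / h i)

/-- Lemma 1 (optimality conditions): at a minimizer of the WNCS joint design problem,
for every node `i` the quantity `(α − mᵢ/B)/hᵢ` is a positive integer `kᵢ*` equal to
`ln(1 − δ)/ln(pᵢ*)`, i.e. `pᵢ* = (1 − δ)^(1/kᵢ*)`. -/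
theorem lemma1_optimality_conditions
    (N : ℕ) (hN : 1 ≤ N) (B α δ β Mth Wmax : ℝ)
    (L C1 Wc : Fin N → ℝ) (qinv : ℝ → ℝ)
    (hB : 0 < B) (hα : 0 < α) (hδ : δ ∈ Set.Ioo (0 : ℝ) 1)
    (hβ : β ∈ Set.Ioc (0 : ℝ) 1) (hMth : 0 < Mth) (hWmax : 0 < Wmax)
    (hL : ∀ i, 0 < L i) (hC1 : ∀ i, 0 < C1 i) (hWc : ∀ i, 0 < Wc i)
    (hqinv : StrictAntiOn qinv (Set.Ioo 0 1))
    (h p m : Fin N → ℝ)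
    (hfeas : Feasible N B α δ β Mth Wmax L C1 qinv h p m)
    (hmin : ∀ h' p' m', Feasible N B α δ β Mth Wmax L C1 qinv h' p' m' →
      objF N B L C1 Wc qinv h p m ≤ objF N B L C1 Wc qinv h' p' m')
    (hpos : ∀ i, 0 < Wtx qinv (C1 i) (L i) (p i) (m i) + Wc i) :
    ∀ i, ∃ k : ℕ, 0 < k ∧
      (α - m i / B) / h i = (k : ℝ) ∧
      (k : ℝ) = Real.log (1 - δ) / Real.log (p i) ∧
      p i = (1 - δ) ^ ((1 : ℝ) / (k : ℝ)) := by
  obtain ⟨hfe, hsum⟩ := hfeas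
  intro i
  obtain ⟨hm, hmM, hh, hhA, hp0, hp1, hpk, hW⟩ := hfe i
  have hA : 0 < α - m i / B := lt_of_lt_of_le hh hhA
  set A := α - m i / B with hAdef
  set k := ⌊A / h i⌋₊ with hkdef
  have hk1 : 1 ≤ k := by
    apply Nat.le_floor
    rw [Nat.cast_one]
    exact (one_le_div hh).2 hhA
  have hk0 : (0:ℝ) < (k:ℝ) := by exact_mod_cast hk1
  have hcoef : 0 < (m i / B) / h i := by positivity
  -- Step 1 : A / h i = k
  have hstep1 : A / h i = (k : ℝ) := by
    by_contra hne
    have hfl : (k:ℝ) ≤ A / h i := Nat.floor_le (by positivity)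
    have hlt : (k:ℝ) < A / h i := lt_of_le_of_ne hfl (Ne.symm hne)
    have hkh : (k:ℝ) * h i < A := (lt_div_iff₀ hh).1 hlt
    have hhlt : h i < A / k := by
      rw [lt_div_iff₀ hk0, mul_comm]; exact hkh
    have hAk_pos : 0 < A / k := by positivity
    have hAk_leA : A / (k:ℝ) ≤ A := div_le_self hA.le (by exact_mod_cast hk1)
    have hfloor' : ⌊A / (A / (k:ℝ))⌋₊ = k := by
      have hself : A / (A / (k:ℝ)) = (k:ℝ) := by
        field_simp
      rw [hself, Nat.floor_natCast]
    set h' := Function.update h i (A / (k:ℝ)) with hh'def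
    have hfeas' : Feasible N B α δ β Mth Wmax L C1 qinv h' p m := by
      constructor
      · intro j
        by_cases hj : j = i
        · subst hj
          refine ⟨hm, hmM, ?_, ?_, hp0, hp1, ?_, hW⟩
          · simpa [hh'def, Function.update_self] using hAk_pos
          · simpa [hh'def, Function.update_self] using hAk_leA
          · simp only [hh'def, Function.update_self]
            rw [← hAdef, hfloor']
            exact hpk
        · simpa [hh'def, Function.update_of_ne hj] using hfe j
      · refine le_trans (Finset.sum_le_sum ?_) hsum
        intro j _
        by_cases hj : j = i
        · subst hj
          simp only [hh'def, Function.update_self]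
          gcongr <;> exact hhlt.le
        · simp [hh'def, Function.update_of_ne hj]
    have hobj : objF N B L C1 Wc qinv h' p m < objF N B L C1 Wc qinv h p m := by
      unfold objF
      apply Finset.sum_lt_sum
      · intro j _
        by_cases hj : j = i
        · subst hj
          simp only [hh'def, Function.update_self]
          have hd : (m j / B) / (A / (k:ℝ)) ≤ (m j / B) / h j := by
            gcongr <;> exact hhlt.le
          exact mul_le_mul_of_nonneg_left hd (hpos j).le
        · simp [hh'def, Function.update_of_ne hj]
      · refine ⟨i, Finset.mem_univ i, ?_⟩
        simp only [hh'def, Function.update_self]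
        have hd : (m i / B) / (A / (k:ℝ)) < (m i / B) / h i :=
          div_lt_div_of_pos_left (by positivity) hh hhlt
        exact mul_lt_mul_of_pos_left hd (hpos i)
    exact absurd (hmin h' p m hfeas') (not_le.2 hobj)
  have h1δ : 0 < 1 - δ := by linarith [hδ.2]
  have h1δ1 : 1 - δ < 1 := by linarith [hδ.1]
  -- Step 2 : p i ^ k = 1 - δ
  have key : ∀ t : ℝ, 0 < t → t < 1 → t ^ k ≤ 1 - δ → p i < t → False := by
    intro t ht0 ht1 htk hplt
    set p' := Function.update p i t with hp'def
    have hq : qinv t < qinv (p i) := hqinv ⟨hp0, hp1⟩ ⟨ht0, ht1⟩ hplt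
    have hWlt : Wtx qinv (C1 i) (L i) t (m i) < Wtx qinv (C1 i) (L i) (p i) (m i) := by
      unfold Wtx
      have hsm : 0 < Real.sqrt (m i) := Real.sqrt_pos.2 hm
      have harg : qinv t / Real.sqrt (m i) + Real.log 2 * L i / m i <
          qinv (p i) / Real.sqrt (m i) + Real.log 2 * L i / m i := by
        gcongr
      have := Real.exp_lt_exp.2 harg
      have hsub : Real.exp (qinv t / Real.sqrt (m i) + Real.log 2 * L i / m i) - 1 <
          Real.exp (qinv (p i) / Real.sqrt (m i) + Real.log 2 * L i / m i) - 1 := by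
        linarith
      exact mul_lt_mul_of_pos_left hsub (hC1 i)
    have hfeas' : Feasible N B α δ β Mth Wmax L C1 qinv h p' m := by
      constructor
      · intro j
        by_cases hj : j = i
        · subst hj
          refine ⟨hm, hmM, hh, hhA, ?_, ?_, ?_, ?_⟩
          · simpa [hp'def, Function.update_self] using ht0
          · simpa [hp'def, Function.update_self] using ht1
          · simp only [hp'def, Function.update_self]
            rw [← hAdef, ← hkdef]
            exact htk
          · simp only [hp'def, Function.update_self]
            exact hWlt.le.trans hW
        · simpa [hp'def, Function.update_of_ne hj] using hfe j
      · exact hsum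
    have hobj : objF N B L C1 Wc qinv h p' m < objF N B L C1 Wc qinv h p m := by
      unfold objF
      apply Finset.sum_lt_sum
      · intro j _
        by_cases hj : j = i
        · subst hj
          simp only [hp'def, Function.update_self]
          apply mul_le_mul_of_nonneg_right _ (by positivity)
          linarith
        · simp [hp'def, Function.update_of_ne hj]
      · refine ⟨i, Finset.mem_univ i, ?_⟩
        simp only [hp'def, Function.update_self]
        apply mul_lt_mul_of_pos_right _ hcoef
        linarith
    exact absurd (hmin h p' m hfeas') (not_le.2 hobj)
  have hpk' : p i ^ k = 1 - δ := by
    rcases lt_or_eq_of_le hpk with hlt | heq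
    · exfalso
      have ht0 : (0:ℝ) < (1 - δ) ^ ((1:ℝ)/(k:ℝ)) := Real.rpow_pos_of_pos h1δ _
      have ht1 : (1 - δ) ^ ((1:ℝ)/(k:ℝ)) < 1 :=
        Real.rpow_lt_one h1δ.le h1δ1 (by positivity)
      have htk : ((1 - δ) ^ ((1:ℝ)/(k:ℝ))) ^ k = 1 - δ := by
        rw [← Real.rpow_natCast ((1 - δ) ^ ((1:ℝ)/(k:ℝ))) k, ← Real.rpow_mul h1δ.le,
          one_div, inv_mul_cancel₀ (ne_of_gt hk0), Real.rpow_one]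
      have hplt : p i < (1 - δ) ^ ((1:ℝ)/(k:ℝ)) := by
        apply lt_of_pow_lt_pow_left₀ k ht0.le
        rw [htk]
        exact hlt
      exact key _ ht0 ht1 htk.le hplt
    · exact heq
  have hlogp : Real.log (p i) < 0 := Real.log_neg hp0 hp1
  have hlogeq : (k:ℝ) * Real.log (p i) = Real.log (1 - δ) := by
    rw [← Real.log_pow, hpk']
  have hkval : (k:ℝ) = Real.log (1 - δ) / Real.log (p i) := by
    rw [eq_div_iff (ne_of_lt hlogp)]
    exact hlogeq
  have hprep : p i = (1 - δ) ^ ((1:ℝ)/(k:ℝ)) := by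
    rw [← hpk', ← Real.rpow_natCast (p i) k, ← Real.rpow_mul hp0.le,
      mul_one_div, div_self (ne_of_gt hk0), Real.rpow_one]
  exact ⟨k, hk1, hstep1, hkval, hprep⟩
end

section
/- Exchange step in the sampling period (first half of the proof of Lemma 1): Let (h, p, m) be feasible for the WNCS joint design problem and let i be a node with Wtx_i(p_i, m_i) + Wc_i > 0 for which (α − m_i/B)/h_i is not an integer. Define h' by replacing the i-th component of h with (α − m_i/B)/⌊(α − m_i/B)/h_i⌋ and leaving all other components unchanged. Then (h', p, m) is feasible and F(h', p, m) < F(h, p, m). In particular, no minimizer of F over the feasible set can have (α − m_i/B)/h_i non-integer at such a node. -/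
/-- Exchange step in the sampling period: if `(α − mᵢ/B)/hᵢ` is not an integer at a node `i`
with positive per-node power coefficient, then replacing `hᵢ` by
`(α − mᵢ/B)/⌊(α − mᵢ/B)/hᵢ⌋` keeps the triple feasible and strictly decreases the objective;
in particular, such a triple is not a minimizer. -/
theorem exchange_step_sampling_period
    (N : ℕ) (hN : 1 ≤ N) (B α δ β Mth Wmax : ℝ)
    (L C1 Wc : Fin N → ℝ) (qinv : ℝ → ℝ)
    (hB : 0 < B) (hα : 0 < α) (hδ : δ ∈ Set.Ioo (0 : ℝ) 1)
    (hβ : β ∈ Set.Ioc (0 : ℝ) 1) (hMth : 0 < Mth) (hWmax : 0 < Wmax)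
    (hL : ∀ i, 0 < L i) (hC1 : ∀ i, 0 < C1 i) (hWc : ∀ i, 0 < Wc i)
    (hqinv : StrictAntiOn qinv (Set.Ioo 0 1))
    (h p m : Fin N → ℝ)
    (hfeas : Feasible N B α δ β Mth Wmax L C1 qinv h p m)
    (i : Fin N)
    (hposi : 0 < Wtx qinv (C1 i) (L i) (p i) (m i) + Wc i)
    (hnotint : ¬ ∃ z : ℤ, (α - m i / B) / h i = (z : ℝ)) :
    let h' := Function.update h i ((α - m i / B) / (⌊(α - m i / B) / h i⌋₊ : ℝ))
    Feasible N B α δ β Mth Wmax L C1 qinv h' p m ∧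
      objF N B L C1 Wc qinv h' p m < objF N B L C1 Wc qinv h p m ∧
      ¬ (∀ h'' p'' m'', Feasible N B α δ β Mth Wmax L C1 qinv h'' p'' m'' →
          objF N B L C1 Wc qinv h p m ≤ objF N B L C1 Wc qinv h'' p'' m'') := by

  intro h'
  obtain ⟨hall, hsum⟩ := hfeas
  obtain ⟨hm, hmth, hh, hhA, hp0, hp1, hpδ, hW⟩ := hall i
  set A := α - m i / B with hA
  have hA0 : 0 < A := lt_of_lt_of_le hh hhA
  set r := A / h i with hr
  have hr0 : 0 < r := div_pos hA0 hh
  have hr1 : (1:ℝ) ≤ r := (one_le_div hh).mpr hhA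
  set k : ℕ := ⌊r⌋₊ with hk
  have hk1 : 1 ≤ k := Nat.le_floor (by exact_mod_cast hr1)
  have hk0 : (0:ℝ) < (k:ℝ) := by exact_mod_cast hk1
  have hkr : (k:ℝ) < r := by
    rcases lt_or_eq_of_le (Nat.floor_le hr0.le) with h1 | h1
    · exact h1
    · exact absurd ⟨(k:ℤ), by exact_mod_cast h1.symm⟩ hnotint
  have hArk : A / r = h i := by
    rw [hr]; field_simp
  have hvpos : 0 < A / (k:ℝ) := div_pos hA0 hk0
  have hlt : h i < A / (k:ℝ) := by
    rw [← hArk]; exact div_lt_div_of_pos_left hA0 hk0 hkr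
  have hupd : h' i = A / (k:ℝ) := Function.update_self ..
  have hAk : A / (A / (k:ℝ)) = (k:ℝ) := by
    field_simp
  have hne : ∀ j, j ≠ i → h' j = h j := fun j hj => Function.update_of_ne hj _ _
  have hterm_le : ∀ j, (m j / B) / h' j ≤ (m j / B) / h j := by
    intro j
    by_cases hj : j = i
    · subst hj
      rw [hupd]
      exact div_le_div_of_nonneg_left (by positivity) hh hlt.le
    · rw [hne j hj]
  have hterm_lt : (m i / B) / h' i < (m i / B) / h i := by
    rw [hupd]
    exact div_lt_div_of_pos_left (by positivity) hh hlt
  have hfeas' : Feasible N B α δ β Mth Wmax L C1 qinv h' p m := by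
    constructor
    · intro j
      obtain ⟨hm', hmth', hh', hhA', hp0', hp1', hpδ', hW'⟩ := hall j
      by_cases hj : j = i
      · subst hj
        refine ⟨hm', hmth', ?_, ?_, hp0', hp1', ?_, hW'⟩
        · rw [hupd]; exact hvpos
        · rw [hupd]; exact div_le_self hA0.le (by exact_mod_cast hk1)
        · rw [hupd, ← hA, hAk, Nat.floor_natCast]
          exact hpδ
      · rw [hne j hj]
        exact ⟨hm', hmth', hh', hhA', hp0', hp1', hpδ', hW'⟩
    · exact le_trans (Finset.sum_le_sum (fun j _ => hterm_le j)) hsum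
  have hobj : objF N B L C1 Wc qinv h' p m < objF N B L C1 Wc qinv h p m := by
    unfold objF
    refine Finset.sum_lt_sum (fun j _ => ?_) ⟨i, Finset.mem_univ i, ?_⟩
    · by_cases hj : j = i
      · subst hj
        exact mul_le_mul_of_nonneg_left (hterm_le j) hposi.le
      · rw [hne j hj]
    · exact mul_lt_mul_of_pos_left hterm_lt hposi
  exact ⟨hfeas', hobj, fun hmin => absurd (hmin h' p m hfeas') (not_le.mpr hobj)⟩
end

section
/- Exchange step in the packet error probability (second half of the proof of Lemma 1): Let (h, p, m) be feasible for the WNCS joint design problem and let i be a node for which the PAoI constraint is slack, i.e. (p_i)^(k_i) < 1 − δ where k_i = ⌊(α − m_i/B)/h_i⌋ ≥ 1. Define p' by replacing the i-th component of p with (1 − δ)^(1/k_i) and leaving all other components unchanged. Then p_i < p'_i < 1, the triple (h, p', m) is feasible (in particular the PAoI constraint holds with equality at node i and the maximum-transmit-power constraint is preserved because Wtx_i is non-increasing in p), and F(h, p', m) < F(h, p, m). In particular, at any minimizer the PAoI violation constraint is tight at every node. -/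
/-- Exchange step in the packet error probability: if the PAoI violation constraint is slack
at a node `i` (with `kᵢ = ⌊(α − mᵢ/B)/hᵢ⌋ ≥ 1`), then replacing `pᵢ` by `(1 − δ)^(1/kᵢ)`
gives a strictly larger packet error probability still below 1, keeps the triple feasible
with the PAoI constraint tight at node `i`, and strictly decreases the objective;
in particular, such a triple is not a minimizer (so at any minimizer the PAoI violation
constraint is tight at every node). -/
theorem exchange_step_packet_error_probability
    (N : ℕ) (hN : 1 ≤ N) (B α δ β Mth Wmax : ℝ)
    (L C1 Wc : Fin N → ℝ) (qinv : ℝ → ℝ)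
    (hB : 0 < B) (hα : 0 < α) (hδ : δ ∈ Set.Ioo (0 : ℝ) 1)
    (hβ : β ∈ Set.Ioc (0 : ℝ) 1) (hMth : 0 < Mth) (hWmax : 0 < Wmax)
    (hL : ∀ i, 0 < L i) (hC1 : ∀ i, 0 < C1 i) (hWc : ∀ i, 0 < Wc i)
    (hqinv : StrictAntiOn qinv (Set.Ioo 0 1))
    (h p m : Fin N → ℝ)
    (hfeas : Feasible N B α δ β Mth Wmax L C1 qinv h p m)
    (i : Fin N) (k : ℕ) (hk : k = ⌊(α - m i / B) / h i⌋₊) (hk1 : 1 ≤ k)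
    (hslack : (p i) ^ k < 1 - δ) :
    let p' := Function.update p i ((1 - δ) ^ ((1 : ℝ) / (k : ℝ)))
    p i < p' i ∧ p' i < 1 ∧
      Feasible N B α δ β Mth Wmax L C1 qinv h p' m ∧
      (p' i) ^ k = 1 - δ ∧
      objF N B L C1 Wc qinv h p' m < objF N B L C1 Wc qinv h p m ∧
      ¬ (∀ h'' p'' m'', Feasible N B α δ β Mth Wmax L C1 qinv h'' p'' m'' →
          objF N B L C1 Wc qinv h p m ≤ objF N B L C1 Wc qinv h'' p'' m'') := by
  intro p'
  obtain ⟨hfa, hsum⟩ := hfeas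
  obtain ⟨hm, hmth, hh, hhα, hp0, hp1, hpaoi, hwtx⟩ := hfa i
  have hδ0 : (0:ℝ) < 1 - δ := by linarith [hδ.2]
  have hδ1 : 1 - δ < 1 := by linarith [hδ.1]
  have hk0 : (k:ℝ) ≠ 0 := Nat.cast_ne_zero.mpr (by omega)
  set q : ℝ := (1 - δ) ^ ((1 : ℝ) / (k : ℝ)) with hqdef
  have hq_pow : q ^ k = 1 - δ := by
    rw [hqdef, ← Real.rpow_natCast ((1-δ) ^ ((1:ℝ)/(k:ℝ))) k, ← Real.rpow_mul hδ0.le,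
      one_div_mul_cancel hk0, Real.rpow_one]
  have hq_pos : 0 < q := Real.rpow_pos_of_pos hδ0 _
  have hq_lt_one : q < 1 := Real.rpow_lt_one hδ0.le hδ1 (by positivity)
  have hpq : p i < q := by
    have hlt : (p i) ^ k < q ^ k := by rw [hq_pow]; exact hslack
    exact lt_of_pow_lt_pow_left₀ k hq_pos.le hlt
  have hp'i : p' i = q := Function.update_self i q p
  have hqinv_lt : qinv q < qinv (p i) := hqinv ⟨hp0, hp1⟩ ⟨hq_pos, hq_lt_one⟩ hpq
  have hs : 0 < Real.sqrt (m i) := Real.sqrt_pos.mpr hm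
  have harg : qinv q / Real.sqrt (m i) < qinv (p i) / Real.sqrt (m i) := by gcongr
  have hexp : Real.exp (qinv q / Real.sqrt (m i) + Real.log 2 * L i / m i) <
      Real.exp (qinv (p i) / Real.sqrt (m i) + Real.log 2 * L i / m i) :=
    Real.exp_lt_exp.mpr (by linarith)
  have hWtx_lt : Wtx qinv (C1 i) (L i) q (m i) < Wtx qinv (C1 i) (L i) (p i) (m i) := by
    unfold Wtx
    exact mul_lt_mul_of_pos_left (by linarith) (hC1 i)
  have hfeas' : Feasible N B α δ β Mth Wmax L C1 qinv h p' m := by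
    refine ⟨fun j => ?_, hsum⟩
    by_cases hji : j = i
    · subst hji
      rw [hp'i]
      exact ⟨hm, hmth, hh, hhα, hq_pos, hq_lt_one, by rw [← hk, hq_pow], hWtx_lt.le.trans hwtx⟩
    · have : p' j = p j := Function.update_of_ne hji _ _
      rw [this]; exact hfa j
  have hfac : 0 < (m i / B) / h i := div_pos (div_pos hm hB) hh
  have hobj : objF N B L C1 Wc qinv h p' m < objF N B L C1 Wc qinv h p m := by
    unfold objF
    refine Finset.sum_lt_sum (fun j _ => ?_) ⟨i, Finset.mem_univ i, ?_⟩
    · by_cases hji : j = i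
      · subst hji
        rw [hp'i]
        exact mul_le_mul_of_nonneg_right (by linarith) hfac.le
      · rw [show p' j = p j from Function.update_of_ne hji _ _]
    · rw [hp'i]
      exact mul_lt_mul_of_pos_right (by linarith) hfac
  refine ⟨by rw [hp'i]; exact hpq, by rw [hp'i]; exact hq_lt_one, hfeas',
    by rw [hp'i]; exact hq_pow, hobj, fun Hmin => absurd (Hmin h p' m hfeas') (not_le.mpr hobj)⟩
end

section
/- Lemma 2 (closed form for the minimal retry budget, made precise): Let δ ∈ (0,1), C1 > 0, m > 0, L > 0, W_max > 0, let Q : ℝ → ℝ be strictly antitone, and let qinv : ℝ → ℝ satisfy Q(qinv(y)) = y for every y ∈ (0,1). Set T := √m·ln(W_max/C1 + 1) − (ln 2)·L/√m and assume 0 < Q(T) < 1. Then the set S = {k ∈ ℕ : k ≥ 1 and C1·(exp(qinv((1 − δ)^(1/k))/√m + (ln 2)·L/m) − 1) ≤ W_max} of retry budgets satisfying the maximum-transmit-power constraint is nonempty and upward closed, and its least element is k* = max(1, ⌈ln(1 − δ)/ln(Q(T))⌉). -/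
/-! The power constraint `Wtx(p, m) ≤ W_max` unwinds (solve for the exponent, then for `qinv p`)
to `qinv p ≤ T`; since `Q` is decreasing and inverts `qinv` on `(0, 1)`, this is `Q T ≤ p`.
For `p = (1 - δ)^(1/k)` taking logarithms gives `k · ln Q(T) ≤ ln(1 - δ)`, and as `ln Q(T) < 0`
the constraint holds exactly for `k ≥ ln(1 - δ) / ln Q(T)`. Hence the admissible budgets are
the integers `k ≥ max(1, ⌈ln(1 - δ) / ln Q(T)⌉)`. -/

open Real

lemma mul_exp_sub_one_le_iff {C W y : ℝ} (hC : 0 < C) (hW : 0 < W / C + 1) :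
    C * (exp y - 1) ≤ W ↔ y ≤ log (W / C + 1) := by
  rw [le_log_iff_exp_le hW, mul_comm, ← le_div_iff₀ hC, sub_le_iff_le_add]

lemma div_sqrt_add_div_le_iff {m x c b : ℝ} (hm : 0 < m) :
    x / √m + c / m ≤ b ↔ x ≤ √m * b - c / √m := by
  have hsm : 0 < √m := sqrt_pos.mpr hm
  have hcm : c / m = c / √m / √m := by rw [div_div, mul_self_sqrt hm.le]
  rw [hcm, ← add_div, div_le_iff₀ hsm, le_sub_iff_add_le, mul_comm]

lemma transmit_power_le_iff {Q qinv : ℝ → ℝ} (hQ : StrictAnti Q) {p : ℝ}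
    (hp : Q (qinv p) = p) {C W m c : ℝ} (hC : 0 < C) (hW : 0 < W) (hm : 0 < m) :
    C * (exp (qinv p / √m + c / m) - 1) ≤ W ↔ Q (√m * log (W / C + 1) - c / √m) ≤ p := by
  rw [mul_exp_sub_one_le_iff hC (by positivity), div_sqrt_add_div_le_iff hm, ← hQ.le_iff_ge, hp]

lemma le_rpow_one_div_iff_log_div_log_le {a q k : ℝ} (ha : 0 < a) (hq0 : 0 < q) (hq1 : q < 1)
    (hk : 0 < k) : q ≤ a ^ (1 / k) ↔ log a / log q ≤ k := by
  rw [← log_le_log_iff hq0 (rpow_pos_of_pos ha _), log_rpow ha, one_div, inv_mul_eq_div,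
    le_div_iff₀ hk, div_le_iff_of_neg (log_neg hq0 hq1), mul_comm]

lemma one_le_and_le_iff_max_ceil_le (r : ℝ) (k : ℕ) : 1 ≤ k ∧ r ≤ k ↔ max 1 ⌈r⌉₊ ≤ k := by
  rw [max_le_iff, Nat.ceil_le]

theorem minimal_retry_budget_closed_form_general
    (δ C1 m L Wmax : ℝ) (hδ : δ ∈ Set.Ioo (0 : ℝ) 1)
    (hC1 : 0 < C1) (hm : 0 < m) (hWmax : 0 < Wmax)
    (Q qinv : ℝ → ℝ) (hQ : StrictAnti Q)
    (hQqinv : ∀ y ∈ Set.Ioo (0 : ℝ) 1, Q (qinv y) = y)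
    (T : ℝ) (hT : T = Real.sqrt m * Real.log (Wmax / C1 + 1) - Real.log 2 * L / Real.sqrt m)
    (hQT : Q T ∈ Set.Ioo (0 : ℝ) 1) :
    let S : Set ℕ := {k | 1 ≤ k ∧
      C1 * (Real.exp (qinv ((1 - δ) ^ ((1 : ℝ) / (k : ℝ))) / Real.sqrt m
        + Real.log 2 * L / m) - 1) ≤ Wmax}
    S.Nonempty ∧ (∀ k ∈ S, ∀ k', k ≤ k' → k' ∈ S) ∧
      IsLeast S (max 1 ⌈Real.log (1 - δ) / Real.log (Q T)⌉₊) := by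
  intro S
  obtain ⟨hδ0, hδ1⟩ := hδ
  have hS : S = Set.Ici (max 1 ⌈log (1 - δ) / log (Q T)⌉₊) := by
    ext k
    simp only [S, Set.mem_ofPred_eq, Set.mem_Ici, ← one_le_and_le_iff_max_ceil_le]
    refine and_congr_right fun hk => ?_
    have hk0 : (0 : ℝ) < k := by exact_mod_cast hk
    have hp : (1 - δ) ^ (1 / (k : ℝ)) ∈ Set.Ioo (0 : ℝ) 1 :=
      ⟨rpow_pos_of_pos (by linarith) _, rpow_lt_one (by linarith) (by linarith) (by positivity)⟩
    rw [transmit_power_le_iff hQ (hQqinv _ hp) hC1 hWmax hm, ← hT,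
      le_rpow_one_div_iff_log_div_log_le (by linarith) hQT.1 hQT.2 hk0]
  rw [hS]
  exact ⟨Set.nonempty_Ici, fun k hk k' hkk' => le_trans hk hkk', isLeast_Ici⟩

/-- Lemma 2 (closed form for the minimal retry budget): with
`T := √m·ln(W_max/C1 + 1) − (ln 2)·L/√m` and `0 < Q(T) < 1`, the set of retry budgets
`k ≥ 1` whose tight packet error probability `(1 − δ)^(1/k)` satisfies the
maximum-transmit-power constraint is nonempty and upward closed, and its least element is
`k* = max(1, ⌈ln(1 − δ)/ln(Q(T))⌉)`. -/
theorem minimal_retry_budget_closed_form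
    (δ C1 m L Wmax : ℝ) (hδ : δ ∈ Set.Ioo (0 : ℝ) 1)
    (hC1 : 0 < C1) (hm : 0 < m) (hL : 0 < L) (hWmax : 0 < Wmax)
    (Q qinv : ℝ → ℝ) (hQ : StrictAnti Q)
    (hQqinv : ∀ y ∈ Set.Ioo (0 : ℝ) 1, Q (qinv y) = y)
    (T : ℝ) (hT : T = Real.sqrt m * Real.log (Wmax / C1 + 1) - Real.log 2 * L / Real.sqrt m)
    (hQT : Q T ∈ Set.Ioo (0 : ℝ) 1) :
    let S : Set ℕ := {k | 1 ≤ k ∧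
      C1 * (Real.exp (qinv ((1 - δ) ^ ((1 : ℝ) / (k : ℝ))) / Real.sqrt m
        + Real.log 2 * L / m) - 1) ≤ Wmax}
    S.Nonempty ∧ (∀ k ∈ S, ∀ k', k ≤ k' → k' ∈ S) ∧
      IsLeast S (max 1 ⌈Real.log (1 - δ) / Real.log (Q T)⌉₊) :=
  minimal_retry_budget_closed_form_general δ C1 m L Wmax hδ hC1 hm hWmax Q qinv hQ hQqinv T hT hQT
end

section
/- Convexity of the finite-blocklength transmit power in the blocklength: For all real constants a ≥ 0 and b ≥ 0, the function f(t) = exp(a·t^(−1/2) + b·t^(−1)) is convex on the open interval (0, ∞). Consequently, for C1 > 0 the constraint function t ↦ C1·(exp(a/√t + b/t) − 1) appearing in the teacher's action-correction problem is convex in the blocklength variable t on (0, ∞). -/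
open Real Set

lemma rpow_neg_convexOn {p : ℝ} (hp : p ≤ 0) :
    ConvexOn ℝ (Set.Ioi (0 : ℝ)) (fun x : ℝ => x ^ p) := by
  refine convexOn_of_hasDerivWithinAt2_nonneg (convex_Ioi 0)
      (f' := fun x => p * x ^ (p - 1)) (f'' := fun x => p * (p - 1) * x ^ (p - 2))
      ?_ ?_ ?_ ?_
  · exact fun x hx => (Real.continuousAt_rpow_const x p (Or.inl (ne_of_gt hx))).continuousWithinAt
  · intro x hx
    rw [interior_Ioi] at hx
    exact (Real.hasDerivAt_rpow_const (Or.inl (ne_of_gt hx))).hasDerivWithinAt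
  · intro x hx
    rw [interior_Ioi] at hx
    have h := ((Real.hasDerivAt_rpow_const (p := p - 1) (Or.inl (ne_of_gt hx))).const_mul p)
    have : p * ((p - 1) * x ^ (p - 1 - 1)) = p * (p - 1) * x ^ (p - 2) := by ring_nf
    rw [this] at h
    exact h.hasDerivWithinAt
  · intro x hx
    rw [interior_Ioi] at hx
    have hx' : (0 : ℝ) < x ^ (p - 2) := Real.rpow_pos_of_pos hx _
    have : 0 ≤ p * (p - 1) := by nlinarith
    positivity

/-- Convexity of the finite-blocklength transmit power in the blocklength: for `a, b ≥ 0`,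
`t ↦ exp(a·t^(−1/2) + b·t⁻¹)` is convex on `(0, ∞)`; consequently, for `C1 > 0` the
constraint function `t ↦ C1·(exp(a/√t + b/t) − 1)` is convex on `(0, ∞)`. -/
theorem fbl_transmit_power_convex_in_blocklength
    (a b : ℝ) (ha : 0 ≤ a) (hb : 0 ≤ b) :
    ConvexOn ℝ (Set.Ioi (0 : ℝ))
        (fun t : ℝ => Real.exp (a * t ^ (-(1 : ℝ) / 2) + b * t⁻¹)) ∧
      ∀ C1 : ℝ, 0 < C1 →
        ConvexOn ℝ (Set.Ioi (0 : ℝ))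
          (fun t : ℝ => C1 * (Real.exp (a / Real.sqrt t + b / t) - 1)) := by
  -- inner function g is convex
  have h1 : ConvexOn ℝ (Set.Ioi (0 : ℝ)) (fun t : ℝ => a * t ^ (-(1 : ℝ) / 2)) :=
    (rpow_neg_convexOn (by norm_num)).smul ha
  have h2 : ConvexOn ℝ (Set.Ioi (0 : ℝ)) (fun t : ℝ => b * t⁻¹) := by
    have := (convexOn_zpow (-1)).smul hb
    simpa using this
  have hg : ConvexOn ℝ (Set.Ioi (0 : ℝ))
      (fun t : ℝ => a * t ^ (-(1 : ℝ) / 2) + b * t⁻¹) := h1.add h2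
  have hf : ConvexOn ℝ (Set.Ioi (0 : ℝ))
      (fun t : ℝ => Real.exp (a * t ^ (-(1 : ℝ) / 2) + b * t⁻¹)) := by
    refine ⟨convex_Ioi 0, fun x hx y hy la mu hla hmu hab => ?_⟩
    calc Real.exp (a * (la • x + mu • y) ^ (-(1:ℝ)/2) + b * (la • x + mu • y)⁻¹)
        ≤ Real.exp (la * (a * x ^ (-(1:ℝ)/2) + b * x⁻¹) + mu * (a * y ^ (-(1:ℝ)/2) + b * y⁻¹)) :=
          Real.exp_le_exp.2 (hg.2 hx hy hla hmu hab)
      _ ≤ la * Real.exp (a * x ^ (-(1:ℝ)/2) + b * x⁻¹)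
            + mu * Real.exp (a * y ^ (-(1:ℝ)/2) + b * y⁻¹) :=
          convexOn_exp.2 (Set.mem_univ _) (Set.mem_univ _) hla hmu hab
  refine ⟨hf, fun C1 hC1 => ?_⟩
  have hsub : ConvexOn ℝ (Set.Ioi (0 : ℝ))
      (fun t : ℝ => Real.exp (a * t ^ (-(1 : ℝ) / 2) + b * t⁻¹) - 1) :=
    hf.sub (concaveOn_const 1 (convex_Ioi 0))
  have := hsub.smul hC1.le
  refine this.congr fun t ht => ?_
  have ht' : (0 : ℝ) < t := ht
  have h : a / Real.sqrt t = a * t ^ (-(1 : ℝ) / 2) := by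
    rw [Real.sqrt_eq_rpow, div_eq_mul_inv, ← Real.rpow_neg ht'.le]
    norm_num
  simp only [smul_eq_mul, h, div_eq_mul_inv]
end
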